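/- (Unique risk-averse equilibrium of Example 1) Consider the two-player finite game with S 1 = {U, D}, S 2 = {L, R} and risk-averse probability tensor p_1(U, L) = 19/25, p_1(D, L) = 6/25, p_1(U, R) = 7/10, p_1(D, R) = 3/10, p_2(L, U) = 2/5, p_2(R, U) = 3/5, p_2(L, D) = 7/25, p_2(R, D) = 18/25 (where p_2's second argument is player 1's pure strategy). Then the pure profile (U, R) is a risk-averse equilibrium, and it is the unique one: every risk-averse equilibrium σ* satisfies σ*_1(U) = 1 and σ*_2(R) = 1. In particular this game has no risk-averse equilibrium in which either player strictly mixes. -/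

import Mathlib

noncomputable section

/-- `σ` is a mixed strategy profile: each `σ j` is nonnegative and sums to one. -/
def IsMixedProfile {ι : Type*} {S : ι → Type*} [∀ j, Fintype (S j)]
    (σ : ∀ j, S j → ℝ) : Prop :=
  (∀ j s, 0 ≤ σ j s) ∧ ∀ j, ∑ s, σ j s = 1

/-- The mixed risk-averse probability `P_i(s_i, σ)` computed from the risk-averse
probability tensor `p`. -/
def mixedProb {ι : Type*} [Fintype ι] [DecidableEq ι] {S : ι → Type*}
    [∀ j, Fintype (S j)]
    (p : ∀ i : ι, S i → (∀ j : {j : ι // j ≠ i}, S j.1) → ℝ)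
    (i : ι) (si : S i) (σ : ∀ j, S j → ℝ) : ℝ :=
  ∑ t : ∀ j : {j : ι // j ≠ i}, S j.1,
    (∏ j : {j : ι // j ≠ i}, σ j.1 (t j)) * p i si t

/-- A risk-averse equilibrium: a mixed strategy profile in which every pure strategy
played with positive probability by player `i` maximizes `P_i(·, σ)`. -/
def IsRAE {ι : Type*} [Fintype ι] [DecidableEq ι] {S : ι → Type*}
    [∀ j, Fintype (S j)]
    (p : ∀ i : ι, S i → (∀ j : {j : ι // j ≠ i}, S j.1) → ℝ)
    (σ : ∀ j, S j → ℝ) : Prop :=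
  IsMixedProfile σ ∧
    ∀ (i : ι) (si : S i), 0 < σ i si →
      ∀ si' : S i, mixedProb p i si' σ ≤ mixedProb p i si σ

/-- In a two-player game, the (unique) opponent of player `i`. -/
def oppIdx (i : Fin 2) : {j : Fin 2 // j ≠ i} :=
  ⟨1 - i, by fin_cases i <;> decide⟩

/-- The risk-averse probability tensor of Example 1. Both players have strategy set
`Bool`; for player `0`, `true = U`, `false = D`, and for player `1`, `true = L`,
`false = R`. The tables encode `p₁(U,L) = 19/25`, `p₁(D,L) = 6/25`, `p₁(U,R) = 7/10`,
`p₁(D,R) = 3/10`, and `p₂(L,U) = 2/5`, `p₂(R,U) = 3/5`, `p₂(L,D) = 7/25`,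
`p₂(R,D) = 18/25`. -/
def pEx1 : ∀ i : Fin 2, Bool → (∀ _j : {j : Fin 2 // j ≠ i}, Bool) → ℝ :=
  fun i si t =>
    if i = 0 then
      match si, t (oppIdx i) with
      | true, true => 19/25
      | false, true => 6/25
      | true, false => 7/10
      | false, false => 3/10
    else
      match si, t (oppIdx i) with
      | true, true => 2/5
      | false, true => 3/5
      | true, false => 7/25
      | false, false => 18/25

/-- The degenerate (pure) mixed strategy profile playing `a j` with probability one. -/
def pureProf (a : Fin 2 → Bool) : ∀ _j : Fin 2, Bool → ℝ :=
  fun j s => if s = a j then 1 else 0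

/-!
In Example 1, `U` beats `D` and `R` beats `L` against every pure strategy of the opponent.
The opponents' weights in `mixedProb` form a probability distribution, so this strict
dominance survives averaging; hence a dominated strategy gets probability zero in every
risk-averse equilibrium, while playing the dominant strategies is itself an equilibrium.
-/

section StrictDominance

variable {ι : Type*} [Fintype ι] [DecidableEq ι] {S : ι → Type*} [∀ j, Fintype (S j)]
  {p : ∀ i : ι, S i → (∀ j : {j : ι // j ≠ i}, S j.1) → ℝ} {σ : ∀ j, S j → ℝ}
  {i : ι} {s s' : S i}

theorem IsMixedProfile.sum_prod_opponents (hσ : IsMixedProfile σ) (i : ι) :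
    ∑ t : ∀ j : {j : ι // j ≠ i}, S j.1, ∏ j, σ j.1 (t j) = 1 := by
  rw [← Fintype.prod_sum]
  exact Finset.prod_eq_one fun j _ => hσ.2 j.1

theorem mixedProb_le_mixedProb (hσ : ∀ j s, 0 ≤ σ j s) (h : ∀ t, p i s t ≤ p i s' t) :
    mixedProb p i s σ ≤ mixedProb p i s' σ :=
  Finset.sum_le_sum fun t _ =>
    mul_le_mul_of_nonneg_left (h t) (Finset.prod_nonneg fun j _ => hσ j.1 _)

theorem mixedProb_lt_mixedProb (hσ : IsMixedProfile σ) (h : ∀ t, p i s t < p i s' t) :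
    mixedProb p i s σ < mixedProb p i s' σ := by
  have hweight : ∃ t : ∀ j : {j : ι // j ≠ i}, S j.1, 0 < ∏ j, σ j.1 (t j) := by
    by_contra! hnonpos
    have := Finset.sum_nonpos fun t (_ : t ∈ Finset.univ) => hnonpos t
    rw [hσ.sum_prod_opponents i] at this
    exact one_pos.not_ge this
  obtain ⟨t, ht⟩ := hweight
  exact Finset.sum_lt_sum
    (fun t _ => mul_le_mul_of_nonneg_left (h t).le (Finset.prod_nonneg fun j _ => hσ.1 j.1 _))
    ⟨t, Finset.mem_univ _, mul_lt_mul_of_pos_left (h t) ht⟩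

theorem IsRAE.eq_zero_of_strictly_dominated (hσ : IsRAE p σ) (h : ∀ t, p i s t < p i s' t) :
    σ i s = 0 := by
  by_contra hne
  exact (hσ.2 i s ((hσ.1.1 i s).lt_of_ne' hne) s').not_gt (mixedProb_lt_mixedProb hσ.1 h)

theorem isRAE_of_dominant_support (hσ : IsMixedProfile σ)
    (h : ∀ i s, 0 < σ i s → ∀ s' t, p i s' t ≤ p i s t) : IsRAE p σ :=
  ⟨hσ, fun i s hs s' => mixedProb_le_mixedProb hσ.1 (h i s hs s')⟩

end StrictDominance

theorem isMixedProfile_pureProf (a : Fin 2 → Bool) : IsMixedProfile (pureProf a) := by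
  refine ⟨fun j s => ?_, fun j => ?_⟩
  · unfold pureProf
    split_ifs <;> norm_num
  · cases h : a j <;> simp [pureProf, h]

theorem eq_of_pos_pureProf {a : Fin 2 → Bool} {j : Fin 2} {s : Bool} (hs : 0 < pureProf a j s) :
    s = a j := by
  by_contra h
  simp [pureProf, h] at hs

theorem pEx1_zero_false_lt_true (t : ∀ _j : {j : Fin 2 // j ≠ 0}, Bool) :
    pEx1 0 false t < pEx1 0 true t := by
  simp only [pEx1]
  cases t (oppIdx 0) <;> norm_num

theorem pEx1_one_true_lt_false (t : ∀ _j : {j : Fin 2 // j ≠ 1}, Bool) :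
    pEx1 1 true t < pEx1 1 false t := by
  simp only [pEx1]
  cases t (oppIdx 1) <;> norm_num

/-- **Unique risk-averse equilibrium of Example 1.** The pure profile `(U, R)` is a
risk-averse equilibrium, and every risk-averse equilibrium `σ*` satisfies `σ*₁(U) = 1`
and `σ*₂(R) = 1`; in particular no player strictly mixes at any risk-averse
equilibrium. -/
theorem example1_unique_risk_averse_equilibrium :
    IsRAE pEx1 (pureProf ![true, false]) ∧
    ∀ σ : ∀ _j : Fin 2, Bool → ℝ, IsRAE pEx1 σ → σ 0 true = 1 ∧ σ 1 false = 1 := by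
  constructor
  · refine isRAE_of_dominant_support (isMixedProfile_pureProf _) fun i s hs s' t => ?_
    obtain rfl := eq_of_pos_pureProf hs
    fin_cases i <;> cases s'
    exacts [(pEx1_zero_false_lt_true t).le, le_rfl, le_rfl, (pEx1_one_true_lt_false t).le]
  · intro σ hσ
    have hD : σ 0 false = 0 := hσ.eq_zero_of_strictly_dominated pEx1_zero_false_lt_true
    have hL : σ 1 true = 0 := hσ.eq_zero_of_strictly_dominated pEx1_one_true_lt_false
    have h0 := hσ.1.2 0
    have h1 := hσ.1.2 1
    rw [Fintype.sum_bool] at h0 h1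
    constructor <;> linarith
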